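/- For every integer k ≥ 1 and every f ∈ B one has γ^k(f) = f + ∑_{j=1}^{k} a_{k,j} · q^{j(j−1)·p^{α+1}/2} · (q^{p^α}−1)^j · T^j · ∇^j(f), where ∇^j is the j-fold composite of ∇. Moreover a_{k,1} = [k]_u for every k ≥ 1. (This is the expansion, used in the proof of Lemma 5.1, of the k-th power of the automorphism Id + T·(q^{p^α}−1)·∇ of B in terms of powers of the q-Higgs derivation ∇.) -/

import Mathlib

open Finset

/-- The q-analogue `[n]_t = ∑_{i=0}^{n-1} t^i`. -/
def qan {A : Type*} [CommRing A] (t : A) (n : ℕ) : A := ∑ i ∈ Finset.range n, t ^ i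

/-- `B := ℤ[q][T]`: the outer variable is `T`, the inner one is `q`. -/
abbrev BTq := Polynomial (Polynomial ℤ)

/-- `u := q^{p^{α+1}} ∈ ℤ[q]`. -/
noncomputable def uPoly (p α : ℕ) : Polynomial ℤ := Polynomial.X ^ p ^ (α + 1)

/-- `γ : B → B`, the `ℤ[q]`-algebra endomorphism with `γ(T) = u·T`. -/
noncomputable def gammaT (p α : ℕ) (f : BTq) : BTq :=
  Polynomial.eval₂ Polynomial.C (Polynomial.C (uPoly p α) * Polynomial.X) f

/-- `∇ : B → B`, the `ℤ[q]`-linear map with `∇(T^m) = [p]_{q^{p^α}}·[m]_u·T^{m−1}`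
(so `γ = Id + (q^{p^α}−1)·T·∇`). -/
noncomputable def nablaT (p α : ℕ) (f : BTq) : BTq :=
  ∑ n ∈ f.support,
    Polynomial.C (f.coeff n * qan ((Polynomial.X : Polynomial ℤ) ^ p ^ α) p *
      qan (uPoly p α) n) * Polynomial.X ^ (n - 1)

/-- The coefficients `a_{k,j} ∈ ℤ[q]`, defined by `a_{k,0} = 1`, `a_{1,1} = 1`,
`a_{k,j} = 0` for `j > k`, and the recursion
`a_{k+1,j} = a_{k,j}·(1 + (u−1)·[j]_u) + a_{k,j−1}`. -/
noncomputable def aa (p α : ℕ) : ℕ → ℕ → Polynomial ℤ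
  | 0, 0 => 1
  | 0, _ + 1 => 0
  | _ + 1, 0 => 1
  | k + 1, j + 1 =>
      aa p α k (j + 1) * (1 + (uPoly p α - 1) * qan (uPoly p α) (j + 1)) + aa p α k j

/-! Because `γ(T) = u·T`, one has `γ(a·T^j·g) = a·u^j·T^j·γ(g)`; with `γ = id + c·T·∇`, `c = q^{p^α} - 1`
(which is `(q^{p^α} - 1)·[p]_{q^{p^α}}·[m]_u = u^m - 1` on monomials) applying `γ` to an expansion
`γ^k = ∑_j b_{k,j}·T^j·∇^j` gives one for `γ^{k+1}` with
`b_{k+1,j+1} = u^{j+1}·b_{k,j+1} + u^j·c·b_{k,j}`. The recursion for `a_{k,j}`, in which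
`1 + (u - 1)·[j]_u = u^j`, is exactly this for `b_{k,j} = a_{k,j}·u^{j(j-1)/2}·c^j`. -/

open Polynomial

section IterateExpansion

variable {R : Type*} [CommRing R] (u c : R)

theorem eval₂_C_mul_X_C_mul_X_pow_mul (a : R) (j : ℕ) (g : R[X]) :
    eval₂ C (C u * X) (C a * X ^ j * g) = C (a * u ^ j) * X ^ j * eval₂ C (C u * X) g := by
  simp only [eval₂_mul, eval₂_C, eval₂_X_pow, mul_pow, C_mul, C_pow]
  ring

theorem iterate_eval₂_C_mul_X_eq_sum (D : R[X] → R[X])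
    (hD : ∀ f, eval₂ C (C u * X) f = f + C c * X * D f) (b : ℕ → ℕ → R)
    (hb_zero : ∀ k, b k 0 = 1) (hb_top : ∀ k, b k (k + 1) = 0)
    (hb_succ : ∀ k j, b (k + 1) (j + 1) = b k (j + 1) * u ^ (j + 1) + b k j * u ^ j * c)
    (k : ℕ) (f : R[X]) :
    (eval₂ C (C u * X))^[k] f = ∑ j ∈ range (k + 1), C (b k j) * X ^ j * D^[j] f := by
  induction k with
  | zero => simp [hb_zero]
  | succ k ih =>
    have hterm : ∀ j, eval₂ C (C u * X) (C (b k j) * X ^ j * D^[j] f) =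
        C (b k j * u ^ j) * X ^ j * D^[j] f + C (b k j * u ^ j * c) * X ^ (j + 1) * D^[j + 1] f := by
      intro j
      rw [eval₂_C_mul_X_C_mul_X_pow_mul, hD, Function.iterate_succ_apply']
      simp only [C_mul]
      ring
    rw [Function.iterate_succ_apply', ih, eval₂_finsetSum]
    simp only [hterm, sum_add_distrib]
    rw [sum_range_succ' _ (k + 1), sum_range_succ' (fun j => C (b k j * u ^ j) * _ * _)]
    simp only [hb_succ, hb_zero, C_add, add_mul, sum_add_distrib]
    rw [sum_range_succ (fun j => C (b k (j + 1) * u ^ (j + 1)) * _ * _), hb_top]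
    simp only [zero_mul, C_0, add_zero, pow_zero, mul_one, C_1, Function.iterate_zero_apply]
    ring

end IterateExpansion

theorem gammaT_eq_add_mul_nablaT (p α : ℕ) (f : BTq) :
    gammaT p α f = f + C ((X : ℤ[X]) ^ p ^ α - 1) * X * nablaT p α f := by
  set u := uPoly p α
  set P := qan ((X : ℤ[X]) ^ p ^ α) p
  have hP : ((X : ℤ[X]) ^ p ^ α - 1) * P = u - 1 :=
    (mul_geom_sum _ p).trans (by rw [← pow_mul, ← pow_succ]; rfl)
  have hmonomial : ∀ (a : ℤ[X]) (n : ℕ), C a * (C u * X) ^ n =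
      C a * X ^ n + C ((X : ℤ[X]) ^ p ^ α - 1) * X * (C (a * P * qan u n) * X ^ (n - 1)) := by
    rintro a (_ | n)
    · simp [qan]
    · have hu : a * u ^ (n + 1) = a + ((X : ℤ[X]) ^ p ^ α - 1) * (a * P * qan u (n + 1)) := by
        have hq : (u - 1) * qan u (n + 1) = u ^ (n + 1) - 1 := mul_geom_sum u (n + 1)
        linear_combination -(a * hq) - a * qan u (n + 1) * hP
      rw [mul_pow, ← C_pow, ← mul_assoc, ← C_mul, hu, Nat.add_sub_cancel, pow_succ]
      simp only [C_add, C_mul]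
      ring
  calc gammaT p α f = ∑ n ∈ f.support, C (f.coeff n) * (C u * X) ^ n := eval₂_eq_sum
    _ = _ := by
      rw [sum_congr rfl fun n _ => hmonomial (f.coeff n) n, sum_add_distrib,
        ← as_sum_support_C_mul_X_pow, nablaT, mul_sum]

theorem aa_zero_right (p α k : ℕ) : aa p α k 0 = 1 := by
  cases k <;> rfl

theorem aa_eq_zero_of_lt (p α : ℕ) {k j : ℕ} (h : k < j) : aa p α k j = 0 := by
  induction k generalizing j with
  | zero => obtain ⟨j, rfl⟩ := Nat.exists_eq_succ_of_ne_zero (by omega : j ≠ 0); rfl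
  | succ k ih =>
    obtain ⟨j, rfl⟩ := Nat.exists_eq_succ_of_ne_zero (by omega : j ≠ 0)
    simp only [aa, ih (by omega : k < j + 1), ih (by omega : k < j), zero_mul, add_zero]

theorem aa_succ_succ (p α k j : ℕ) :
    aa p α (k + 1) (j + 1) = aa p α k (j + 1) * uPoly p α ^ (j + 1) + aa p α k j := by
  rw [aa, mul_comm (uPoly p α - 1), qan, geom_sum_mul, add_sub_cancel]

theorem aa_one (p α k : ℕ) : aa p α k 1 = qan (uPoly p α) k := by
  induction k with
  | zero => rfl
  | succ k ih => rw [aa_succ_succ, ih, aa_zero_right, qan, qan, geom_sum_succ, pow_one, mul_comm]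

theorem iterate_gammaT_eq (p α k : ℕ) (f : BTq) :
    (gammaT p α)^[k] f =
      f + ∑ j ∈ Icc 1 k,
        C (aa p α k j * (X : ℤ[X]) ^ (j * (j - 1) / 2 * p ^ (α + 1)) * ((X : ℤ[X]) ^ p ^ α - 1) ^ j) *
          X ^ j * (nablaT p α)^[j] f := by
  have hexpansion := iterate_eval₂_C_mul_X_eq_sum (uPoly p α) ((X : ℤ[X]) ^ p ^ α - 1) (nablaT p α)
    (gammaT_eq_add_mul_nablaT p α)
    (fun k j => aa p α k j * (X : ℤ[X]) ^ (j * (j - 1) / 2 * p ^ (α + 1)) * ((X : ℤ[X]) ^ p ^ α - 1) ^ j)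
    (by simp [aa_zero_right]) (fun k => by simp [aa_eq_zero_of_lt])
    (fun k j => by
      rw [aa_succ_succ, Nat.triangle_succ, add_mul, pow_add, mul_comm j, pow_mul, uPoly]
      ring) k f
  refine hexpansion.trans ?_
  rw [range_eq_Ico, sum_eq_sum_Ico_succ_bot (by omega : 0 < k + 1), Ico_add_one_right_eq_Icc]
  simp [aa_zero_right]

theorem stmt17 (p : ℕ) (α : ℕ) :
    (∀ k : ℕ, 1 ≤ k → ∀ f : BTq,
      (gammaT p α)^[k] f =
        f + ∑ j ∈ Finset.Icc 1 k,
          Polynomial.C (aa p α k j *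
              (Polynomial.X : Polynomial ℤ) ^ (j * (j - 1) / 2 * p ^ (α + 1)) *
              ((Polynomial.X : Polynomial ℤ) ^ p ^ α - 1) ^ j) *
            Polynomial.X ^ j * (nablaT p α)^[j] f) ∧
    (∀ k : ℕ, 1 ≤ k → aa p α k 1 = qan (uPoly p α) k) :=
  ⟨fun k _ f => iterate_gammaT_eq p α k f, fun k _ => aa_one p α k⟩
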